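/- Let G and H be finite connected graphs, each with at least one edge, with H square-free, let f : G → H be a graph homomorphism, v ∈ V(G) a non-isolated vertex, w = f(v), and let K be the image of f_* : π₁²(G,v) → π₁²(H,w). If K is not commutative (equivalently, K is a non-abelian free group), then Π(f,v) is the trivial group. -/

import Mathlib

structure SGraph where
  V : Type
  E : V → V → Prop
  symm : ∀ {x y}, E x y → E y x

def IsGraphHom (G H : SGraph) (f : G.V → H.V) : Prop :=
  ∀ {x y}, G.E x y → H.E (f x) (f y)

structure Walk (G : SGraph) (a b : G.V) where
  len : ℕ
  toFun : ℕ → G.V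
  start_eq : toFun 0 = a
  end_eq : toFun len = b
  adj : ∀ i, i < len → G.E (toFun i) (toFun (i + 1))

structure MultiHom (G H : SGraph) where
  toFun : G.V → Set H.V
  nonempty : ∀ x, (toFun x).Nonempty
  edge : ∀ {x y}, G.E x y → ∀ a ∈ toFun x, ∀ b ∈ toFun y, H.E a b

def MultiHom.le {G H : SGraph} (η η' : MultiHom G H) : Prop :=
  ∀ x, η.toFun x ⊆ η'.toFun x

def SameComponent {G H : SGraph} (η η' : MultiHom G H) : Prop :=
  Relation.ReflTransGen (fun a b => MultiHom.le a b ∨ MultiHom.le b a) η η'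

def ofHom {G H : SGraph} (f : G.V → H.V) (hf : IsGraphHom G H f) : MultiHom G H where
  toFun x := {f x}
  nonempty x := ⟨f x, rfl⟩
  edge := by
    intro x y hxy a ha b hb
    rw [Set.mem_singleton_iff] at ha hb
    subst ha; subst hb
    exact hf hxy

def prodI (G : SGraph) (n : ℕ) : SGraph where
  V := G.V × Fin (n + 1)
  E := fun p q => G.E p.1 q.1 ∧ p.2.val ≤ q.2.val + 1 ∧ q.2.val ≤ p.2.val + 1
  symm := by
    rintro p q ⟨h1, h2, h3⟩
    exact ⟨G.symm h1, h3, h2⟩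

def MoveA {G : SGraph} {a b : G.V} (γ δ : Walk G a b) : Prop :=
  δ.len = γ.len + 2 ∧ ∃ k ≤ γ.len,
    (∀ i ≤ k, δ.toFun i = γ.toFun i) ∧
    (∀ i, k ≤ i → i ≤ γ.len → δ.toFun (i + 2) = γ.toFun i)

def MoveB {G : SGraph} {a b : G.V} (γ δ : Walk G a b) : Prop :=
  γ.len = δ.len ∧ ∃ j, ∀ i ≤ γ.len, i ≠ j → γ.toFun i = δ.toFun i

def Eqv1 {G : SGraph} {a b : G.V} : Walk G a b → Walk G a b → Prop :=
  Relation.EqvGen MoveA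

def Eqv2 {G : SGraph} {a b : G.V} : Walk G a b → Walk G a b → Prop :=
  Relation.EqvGen (fun γ δ => MoveA γ δ ∨ MoveB γ δ)

noncomputable def SGraph.dist (G : SGraph) (a b : G.V) : ℕ :=
  sInf {n | ∃ γ : Walk G a b, γ.len = n}

def SGraph.Connected (G : SGraph) : Prop := ∀ a b : G.V, Nonempty (Walk G a b)

def SGraph.Bipartite (G : SGraph) : Prop :=
  ∃ c : G.V → ZMod 2, ∀ {x y}, G.E x y → c x ≠ c y

def constWalk {G : SGraph} (a : G.V) : Walk G a a :=
  ⟨0, fun _ => a, rfl, rfl, fun i hi => absurd hi (by omega)⟩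

def Walk.concat {G : SGraph} {a b c : G.V} (γ : Walk G a b) (δ : Walk G b c) :
    Walk G a c where
  len := γ.len + δ.len
  toFun i := if i ≤ γ.len then γ.toFun i else δ.toFun (i - γ.len)
  start_eq := by simp [γ.start_eq]
  end_eq := by
    by_cases h : δ.len = 0
    · have hbc : b = c := by
        have h1 := δ.end_eq
        rw [h, δ.start_eq] at h1
        exact h1
      simp [h, γ.end_eq, hbc]
    · have h1 : ¬ (γ.len + δ.len ≤ γ.len) := by omega
      try dsimp only
      rw [if_neg h1]
      have h2 : γ.len + δ.len - γ.len = δ.len := by omega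
      rw [h2, δ.end_eq]
  adj := by
    intro i hi
    try dsimp only
    rcases lt_trichotomy i γ.len with h | h | h
    · rw [if_pos (by omega : i ≤ γ.len), if_pos (by omega : i + 1 ≤ γ.len)]
      exact γ.adj i h
    · have hδ : 0 < δ.len := by omega
      rw [if_pos (by omega : i ≤ γ.len), if_neg (by omega : ¬ i + 1 ≤ γ.len)]
      have h2 : i + 1 - γ.len = 1 := by omega
      rw [h2, h, γ.end_eq]
      have h3 := δ.adj 0 hδ
      rw [δ.start_eq] at h3
      exact h3
    · rw [if_neg (by omega : ¬ i ≤ γ.len), if_neg (by omega : ¬ i + 1 ≤ γ.len)]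
      have h2 : i + 1 - γ.len = (i - γ.len) + 1 := by omega
      rw [h2]
      exact δ.adj (i - γ.len) (by omega)

def Walk.reverse {G : SGraph} {a b : G.V} (γ : Walk G a b) : Walk G b a where
  len := γ.len
  toFun i := γ.toFun (γ.len - i)
  start_eq := by simp [γ.end_eq]
  end_eq := by simp [γ.start_eq]
  adj := by
    intro i hi
    have h1 : γ.len - i = (γ.len - (i + 1)) + 1 := by omega
    have h2 := γ.adj (γ.len - (i + 1)) (by omega)
    rw [← h1] at h2
    exact G.symm h2

def Walk.map {G H : SGraph} (f : G.V → H.V) (hf : IsGraphHom G H f) {a b : G.V}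
    (γ : Walk G a b) : Walk H (f a) (f b) where
  len := γ.len
  toFun i := f (γ.toFun i)
  start_eq := by (try dsimp only); rw [γ.start_eq]
  end_eq := by (try dsimp only); rw [γ.end_eq]
  adj := fun i hi => hf (γ.adj i hi)

def Walk.pow {G : SGraph} {a : G.V} (γ : Walk G a a) : ℕ → Walk G a a
  | 0 => constWalk a
  | n + 1 => (Walk.pow γ n).concat γ

def Walk.zpow {G : SGraph} {a : G.V} (γ : Walk G a a) : ℤ → Walk G a a
  | Int.ofNat n => γ.pow n
  | Int.negSucc n => γ.reverse.pow (n + 1)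
def finClip (n t : ℕ) : Fin (n + 1) := ⟨min t n, by omega⟩

def realizedWalk {G H : SGraph} {n : ℕ} (h : (prodI G n).V → H.V)
    (hh : IsGraphHom (prodI G n) H h) {v v' : G.V} (hvv' : G.E v v')
    {w : H.V} (h0 : h (v, finClip n 0) = w) (hN : h (v, finClip n n) = w) :
    Walk H w w where
  len := 2 * n
  toFun i := if i % 2 = 0 then h (v, finClip n (i / 2)) else h (v', finClip n (i / 2))
  start_eq := by
    try dsimp only
    rw [if_pos (by norm_num : (0:ℕ) % 2 = 0), Nat.zero_div]
    exact h0
  end_eq := by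
    try dsimp only
    rw [if_pos (by omega : (2 * n) % 2 = 0)]
    have h2 : 2 * n / 2 = n := by omega
    rw [h2]
    exact hN
  adj := by
    intro i hi
    try dsimp only
    rcases Nat.even_or_odd i with he | ho
    · obtain ⟨t, ht⟩ := he
      rw [if_pos (by omega : i % 2 = 0), if_neg (by omega : ¬ (i + 1) % 2 = 0)]
      have h4 : (i + 1) / 2 = i / 2 := by omega
      rw [h4]
      refine hh ⟨hvv', ?_, ?_⟩ <;> ((try dsimp only); omega)
    · obtain ⟨t, ht⟩ := ho
      rw [if_neg (by omega : ¬ i % 2 = 0), if_pos (by omega : (i + 1) % 2 = 0)]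
      refine hh ⟨G.symm hvv', ?_, ?_⟩ <;> (dsimp only [finClip]; omega)

def Realizable {G H : SGraph} (f : G.V → H.V) (v : G.V) (ω : Walk H (f v) (f v)) : Prop :=
  ∃ (n : ℕ) (h : (prodI G n).V → H.V) (hh : IsGraphHom (prodI G n) H h)
    (hs : ∀ x, h (x, finClip n 0) = f x) (he : ∀ x, h (x, finClip n n) = f x)
    (v' : G.V) (_ : G.E v v'),
    Eqv2 ω (realizedWalk h hh ‹G.E v v'› (hs v) (he v))
def SquareFree (G : SGraph) : Prop :=
  (∀ x, ¬ G.E x x) ∧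
  ¬ ∃ a b c d : G.V, a ≠ b ∧ a ≠ c ∧ a ≠ d ∧ b ≠ c ∧ b ≠ d ∧ c ≠ d ∧
    G.E a b ∧ G.E b c ∧ G.E c d ∧ G.E d a

def nbhd (G : SGraph) (v : G.V) : Set G.V := {y | G.E v y}

def nbhd2 (G : SGraph) (v : G.V) : Set G.V := {z | ∃ y, G.E v y ∧ G.E y z}

def IsGraphCovering (G H : SGraph) (p : G.V → H.V) : Prop :=
  IsGraphHom G H p ∧ ∀ v : G.V, Set.BijOn p (nbhd G v) (nbhd H (p v))

def Is2CoveringMap (G H : SGraph) (p : G.V → H.V) : Prop :=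
  IsGraphHom G H p ∧ ∀ v : G.V,
    Set.BijOn p (nbhd G v) (nbhd H (p v)) ∧ Set.BijOn p (nbhd2 G v) (nbhd2 H (p v))

def pushforward {G H1 H2 : SGraph} (p : H1.V → H2.V) (hp : IsGraphHom H1 H2 p)
    (η : MultiHom G H1) : MultiHom G H2 where
  toFun x := p '' η.toFun x
  nonempty x := (η.nonempty x).image p
  edge := by
    rintro x y hxy a ⟨a', ha', rfl⟩ b ⟨b', hb', rfl⟩
    exact hp (η.edge hxy a' ha' b' hb')

def IsCycleWalk {G : SGraph} {a : G.V} (γ : Walk G a a) : Prop :=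
  3 ≤ γ.len ∧ ∀ i j, i < γ.len → j < γ.len → γ.toFun i = γ.toFun j → i = j

def IsTree (T : SGraph) : Prop :=
  (∀ x, ¬ T.E x x) ∧ (∀ a b : T.V, Nonempty (Walk T a b)) ∧
    ∀ (a : T.V) (γ : Walk T a a), ¬ IsCycleWalk γ

def IsPath {G : SGraph} {a b : G.V} (γ : Walk G a b) : Prop :=
  ∀ i j, i ≤ γ.len → j ≤ γ.len → γ.toFun i = γ.toFun j → i = j

def OnWalk {G : SGraph} {a b : G.V} (γ : Walk G a b) (y : G.V) : Prop :=
  ∃ i ≤ γ.len, γ.toFun i = y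

def CrossHomotopic (G H : SGraph) (f g : G.V → H.V) : Prop :=
  ∃ (n : ℕ) (h : (prodI G n).V → H.V), IsGraphHom (prodI G n) H h ∧
    (∀ x, h (x, finClip n 0) = f x) ∧ (∀ x, h (x, finClip n n) = g x)

def quotGraph (G : SGraph) (Γ : Type) [Group Γ] [MulAction Γ G.V] : SGraph where
  V := Quotient (MulAction.orbitRel Γ G.V)
  E := fun α β => ∃ x y : G.V, Quotient.mk (MulAction.orbitRel Γ G.V) x = α ∧
        Quotient.mk (MulAction.orbitRel Γ G.V) y = β ∧ G.E x y
  symm := by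
    rintro α β ⟨x, y, hx, hy, hxy⟩
    exact ⟨y, x, hy, hx, G.symm hxy⟩

/-!
Send a walk in `H` to the free group on ordered pairs of vertices, a step `x → y` contributing
`(x, y) (y, x)⁻¹`. Backtracks cancel, and since `H` is square-free two 2-step walks with the same
ends and different middle vertices are both backtracks; so the map is invariant under `≃₂`. Walks
without backtracks give reduced words, so it is also injective on `≃₂`-classes, and `π₁²(H, w)`
embeds into a free group.

Read a ×-homotopy from `f` to `f` level by level. For a closed walk `γ` at `v`, the images of `γ`
on two consecutive levels form a ladder whose squares commute in the free group (square-freeness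
again), so they are conjugate by the word of the rung `h (v, t) → h (v', t) → h (v, t + 1)`. The
first and last levels are both `f ∘ γ`, and the rungs make up the realized walk, so its word
commutes with all of `K`. In a free group, commuting with a fixed nontrivial element is
transitive; hence if `K` is not commutative, the realized word is trivial.
-/

namespace FreeGroup

variable {α : Type*}

theorem mk_singleton_mem_zpowers (x : α × Bool) : mk [x] ∈ Subgroup.zpowers (of x.1) := by
  obtain ⟨a, _ | _⟩ := x
  · have : mk [(a, false)] = (of a)⁻¹ := by simp [of, inv_mk, invRev]
    exact this ▸ Subgroup.inv_mem _ (Subgroup.mem_zpowers _)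
  · exact Subgroup.mem_zpowers _

theorem mem_zpowers_of_commute_of [DecidableEq α] {a : α} {w : FreeGroup α}
    (h : Commute w (of a)) : w ∈ Subgroup.zpowers (of a) := by
  set Z := Subgroup.zpowers (of a)
  have hZ : ∀ u ∈ Z, Commute u (of a) := by
    rintro u ⟨k, rfl⟩
    exact (Commute.refl _).zpow_left k
  suffices key : ∀ L : List (α × Bool), IsReduced L → Commute (mk L) (of a) → mk L ∈ Z by
    simpa only [mk_toWord] using key w.toWord isReduced_toWord (by rwa [mk_toWord])
  intro L
  induction hn : L.length using Nat.strong_induction_on generalizing L with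
  | _ n ih =>
  intro hred hcomm
  by_cases hhead : ∃ x L', L = x :: L' ∧ x.1 = a
  · obtain ⟨x, L', rfl, rfl⟩ := hhead
    have hx : mk [x] ∈ Z := mk_singleton_mem_zpowers x
    have hsplit : mk (x :: L') = mk [x] * mk L' := (mul_mk (L₁ := [x])).symm
    rw [hsplit, Z.mul_mem_cancel_left hx]
    refine ih L'.length (by simp [← hn]) L' rfl (hred.infix (List.suffix_cons x L').isInfix) ?_
    have : mk L' = (mk [x])⁻¹ * mk (x :: L') := by rw [hsplit]; group
    exact this ▸ (hZ _ hx).inv_left.mul_left hcomm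
  by_cases hlast : ∃ L' x, L = L' ++ [x] ∧ x.1 = a
  · obtain ⟨L', x, rfl, rfl⟩ := hlast
    have hx : mk [x] ∈ Z := mk_singleton_mem_zpowers x
    have hsplit : mk (L' ++ [x]) = mk L' * mk [x] := mul_mk.symm
    rw [hsplit, Z.mul_mem_cancel_right hx]
    refine ih L'.length (by simp [← hn]) L' rfl
      (hred.infix (List.prefix_append L' [x]).isInfix) ?_
    have : mk L' = mk (L' ++ [x]) * (mk [x])⁻¹ := by rw [hsplit]; group
    exact this ▸ hcomm.mul_left (hZ _ hx).inv_left
  rcases L with _ | ⟨x, M⟩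
  · exact Z.one_mem
  -- now `of a` cancels against neither end of `L`, so `of a * mk L` and `mk L * of a` have
  -- reduced words with different first letters
  exfalso
  obtain ⟨N, y, hNy⟩ := (List.eq_nil_or_concat (x :: M)).resolve_left (List.cons_ne_nil x M)
  rw [List.concat_eq_append] at hNy
  have hxa : x.1 ≠ a := fun hx => hhead ⟨x, M, rfl, hx⟩
  have hya : y.1 ≠ a := fun hy => hlast ⟨N, y, hNy, hy⟩
  have hleft : (of a * mk (x :: M)).toWord = (a, true) :: x :: M := by
    rw [of, mul_mk, toWord_mk]
    refine IsReduced.reduce_eq (isReduced_cons_cons.mpr ⟨fun h => absurd h.symm hxa, hred⟩)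
  have hright : (mk (x :: M) * of a).toWord = x :: M ++ [(a, true)] := by
    rw [of, mul_mk, toWord_mk]
    refine IsReduced.reduce_eq (List.isChain_append.mpr ⟨hred, List.isChain_singleton _, ?_⟩)
    rw [hNy]
    simp only [List.getLast?_concat, Option.mem_def, Option.some.injEq, List.head?_cons]
    rintro _ rfl _ rfl h
    exact absurd h hya
  have := congrArg List.head? (hleft.symm.trans (hcomm.eq ▸ hright))
  simp only [List.head?_cons, List.cons_append, Option.some.injEq] at this
  exact hxa (congrArg Prod.fst this).symm

theorem subsingleton_of_commute_of_ne_one {c : FreeGroup α} (hc : c ≠ 1)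
    (h : ∀ s, Commute (of s) c) : Subsingleton α := by
  classical
  refine ⟨fun s t => by_contra fun hst => hc ?_⟩
  obtain ⟨k, rfl⟩ := Subgroup.mem_zpowers_iff.mp (mem_zpowers_of_commute_of (h s).symm)
  obtain ⟨j, hj⟩ := Subgroup.mem_zpowers_iff.mp (mem_zpowers_of_commute_of (h t).symm)
  let φ : FreeGroup α →* Multiplicative ℤ :=
    FreeGroup.lift fun x => if x = s then Multiplicative.ofAdd 1 else 1
  have hk : φ (of s ^ k) = φ (of t ^ j) := by rw [hj]
  simp only [φ, map_zpow, lift_apply_of, if_pos, if_neg (Ne.symm hst), one_zpow,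
    IsMulTorsionFree.zpow_eq_one_iff, ofAdd_eq_one, one_ne_zero, false_or] at hk
  rw [hk, zpow_zero]

theorem commute_of_subsingleton [Subsingleton α] (x y : FreeGroup α) : Commute x y := by
  cases isEmpty_or_nonempty α
  · exact Subsingleton.elim _ _
  · have := uniqueOfSubsingleton (Classical.arbitrary α)
    exact IsCyclic.commGroup.mul_comm x y

end FreeGroup

theorem IsFreeGroup.commute_of_commute_of_ne_one {G : Type*} [Group G] [IsFreeGroup G]
    {g a b : G} (hg : g ≠ 1) (ha : Commute a g) (hb : Commute b g) : Commute a b := by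
  -- by Nielsen–Schreier the centralizer of `g` is free, and its nontrivial central element `g`
  -- leaves room for at most one generator
  set Z := Subgroup.centralizer {g}
  have hmem : ∀ {x}, Commute x g → x ∈ Z := fun hx =>
    Subgroup.mem_centralizer_singleton_iff.mpr hx.eq
  let e := IsFreeGroup.toFreeGroup Z
  have hgZ : (⟨g, hmem (Commute.refl g)⟩ : Z) ≠ 1 := fun h => hg (congrArg Subtype.val h)
  have := FreeGroup.subsingleton_of_commute_of_ne_one (e.map_ne_one_iff.mpr hgZ) fun s => by
    obtain ⟨z, hz⟩ := e.surjective (FreeGroup.of s)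
    rw [← hz]
    refine Commute.map (Subtype.ext ?_) e
    exact Subgroup.mem_centralizer_singleton_iff.mp z.2
  have := (FreeGroup.commute_of_subsingleton (e ⟨a, hmem ha⟩) (e ⟨b, hmem hb⟩)).map e.symm
  simpa using this.map Z.subtype

theorem prod_range_mul_eq_mul_prod_range {M : Type*} [Monoid M] {x y C : ℕ → M} {n : ℕ}
    (h : ∀ i < n, x i * C (i + 1) = C i * y i) :
    ((List.range n).map x).prod * C n = C 0 * ((List.range n).map y).prod := by
  induction n with
  | zero => simp
  | succ n ih =>
    simp only [List.range_succ, List.map_append, List.prod_append, List.map_singleton,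
      List.prod_singleton, mul_assoc, h n (by omega)]
    rw [← mul_assoc, ih fun i hi => h i (by omega), mul_assoc]

open FreeGroup

section PathProd

variable {V : Type*}

def edgeGen (x y : V) : FreeGroup (V × V) := of (x, y) * (of (y, x))⁻¹

theorem edgeGen_mul_edgeGen_swap (x y : V) : edgeGen x y * edgeGen y x = 1 := by
  simp [edgeGen]

def pathProd (g : ℕ → V) (n : ℕ) : FreeGroup (V × V) :=
  ((List.range n).map fun i => edgeGen (g i) (g (i + 1))).prod

theorem pathProd_zero (g : ℕ → V) : pathProd g 0 = 1 := rfl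

theorem pathProd_succ (g : ℕ → V) (n : ℕ) :
    pathProd g (n + 1) = pathProd g n * edgeGen (g n) (g (n + 1)) := by
  simp [pathProd, List.range_succ]

theorem pathProd_two (g : ℕ → V) :
    pathProd g 2 = edgeGen (g 0) (g 1) * edgeGen (g 1) (g 2) := by
  simp [pathProd_succ, pathProd_zero]

theorem pathProd_add (g : ℕ → V) (m k : ℕ) :
    pathProd g (m + k) = pathProd g m * pathProd (fun i => g (m + i)) k := by
  simp [pathProd, List.range_add, Function.comp_def, add_assoc]

theorem pathProd_congr {g g' : ℕ → V} {n : ℕ} (h : ∀ i ≤ n, g i = g' i) :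
    pathProd g n = pathProd g' n := by
  refine congrArg List.prod (List.map_congr_left fun i hi => ?_)
  rw [List.mem_range] at hi
  rw [h i hi.le, h (i + 1) hi]

theorem pathProd_two_mul (g : ℕ → V) (n : ℕ) :
    pathProd g (2 * n) = ((List.range n).map fun t =>
      edgeGen (g (2 * t)) (g (2 * t + 1)) * edgeGen (g (2 * t + 1)) (g (2 * t + 2))).prod := by
  induction n with
  | zero => rfl
  | succ n ih =>
    rw [show 2 * (n + 1) = 2 * n + 1 + 1 by ring, pathProd_succ, pathProd_succ, ih,
      List.range_succ, List.map_append, List.prod_append, mul_assoc]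
    simp

end PathProd

section EdgeLetters

variable {V : Type*}

def edgeLetters (g : ℕ → V) : ℕ → List ((V × V) × Bool)
  | 0 => []
  | n + 1 => edgeLetters g n ++ [((g n, g (n + 1)), true), ((g (n + 1), g n), false)]

theorem mk_edgeLetters (g : ℕ → V) (n : ℕ) : mk (edgeLetters g n) = pathProd g n := by
  induction n with
  | zero => rfl
  | succ n ih => simp [edgeLetters, pathProd_succ, ← ih, edgeGen, of, inv_mk, invRev, mul_mk]

theorem length_edgeLetters (g : ℕ → V) (n : ℕ) : (edgeLetters g n).length = 2 * n := by
  induction n with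
  | zero => rfl
  | succ n ih =>
    simp only [edgeLetters, List.length_append, ih, List.length_cons, List.length_nil]
    ring

theorem isReduced_edgeLetters {g : ℕ → V} {n : ℕ} (hloop : ∀ i < n, g i ≠ g (i + 1))
    (hback : ∀ i, i + 2 ≤ n → g (i + 2) ≠ g i) : IsReduced (edgeLetters g n) := by
  induction n with
  | zero => exact IsReduced.nil
  | succ n ih =>
    refine List.isChain_append.mpr ⟨ih (fun i hi => hloop i (by omega))
      (fun i hi => hback i (by omega)), ?_, ?_⟩
    · simpa using fun h _ => hloop n (by omega) h
    · cases n with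
      | zero => simp [edgeLetters]
      | succ m => simpa [edgeLetters] using (hback m (by omega)).symm

theorem eq_of_edgeLetters_eq {g g' : ℕ → V} {n : ℕ} (h : edgeLetters g n = edgeLetters g' n)
    (h0 : g 0 = g' 0) : ∀ i ≤ n, g i = g' i := by
  induction n with
  | zero => simpa using h0
  | succ n ih =>
    obtain ⟨hn, hlast⟩ := List.append_inj h (by simp [length_edgeLetters])
    intro i hi
    rcases hi.eq_or_lt with rfl | hi
    · simp only [List.cons.injEq, Prod.mk.injEq] at hlast
      exact hlast.2.1.1.1
    · exact ih hn i (by omega)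

end EdgeLetters

namespace SquareFree

variable {H : SGraph}

theorem irrefl (hH : SquareFree H) {x y : H.V} (hxy : H.E x y) : x ≠ y :=
  fun h => hH.1 y (h ▸ hxy)

theorem edgeGen_mul_edgeGen_eq (hH : SquareFree H) {x y y' z : H.V}
    (hxy : H.E x y) (hyz : H.E y z) (hxy' : H.E x y') (hy'z : H.E y' z) :
    edgeGen x y * edgeGen y z = edgeGen x y' * edgeGen y' z := by
  by_cases hy : y = y'
  · rw [hy]
  -- otherwise `x y z y'` would be a 4-cycle, so the two 2-step paths are backtracks
  obtain rfl : x = z := by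
    by_contra hxz
    exact hH.2 ⟨x, y, z, y', hH.irrefl hxy, hxz, hH.irrefl hxy', hH.irrefl hyz, hy,
      hH.irrefl (H.symm hy'z), hxy, hyz, H.symm hy'z, H.symm hxy'⟩
  rw [edgeGen_mul_edgeGen_swap, edgeGen_mul_edgeGen_swap]

theorem pathProd_eq_of_eq_except (hH : SquareFree H) {g g' : ℕ → H.V} {n j : ℕ}
    (hg : ∀ i < n, H.E (g i) (g (i + 1))) (hg' : ∀ i < n, H.E (g' i) (g' (i + 1)))
    (hj : 0 < j) (hjn : j < n) (heq : ∀ i ≤ n, i ≠ j → g i = g' i) :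
    pathProd g n = pathProd g' n := by
  obtain ⟨k, rfl⟩ : ∃ k, j = k + 1 := ⟨j - 1, by omega⟩
  obtain ⟨r, rfl⟩ : ∃ r, n = k + 2 + r := ⟨n - (k + 2), by omega⟩
  have hk : g k = g' k := heq k (by omega) (by omega)
  have hk2 : g (k + 2) = g' (k + 2) := heq (k + 2) (by omega) (by omega)
  simp only [pathProd_add, pathProd_two, add_zero]
  refine congrArg₂ (· * ·) (congrArg₂ (· * ·) ?_ ?_) ?_
  · exact pathProd_congr fun i hi => heq i (by omega) (by omega)
  · rw [← hk, ← hk2]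
    refine hH.edgeGen_mul_edgeGen_eq (hg k (by omega)) (hg (k + 1) (by omega)) ?_ ?_
    · simpa [hk] using hg' k (by omega)
    · simpa [hk2] using hg' (k + 1) (by omega)
  · exact pathProd_congr fun i hi => heq _ (by omega) (by omega)

theorem pathProd_mul_eq_mul_pathProd (hH : SquareFree H) {a b : ℕ → H.V} {u : H.V} {m : ℕ}
    (ha : ∀ i < m, H.E (a i) (a (i + 1))) (hb : ∀ i < m, H.E (b i) (b (i + 1)))
    (hba : ∀ i < m, H.E (b i) (a (i + 1))) (ham : a m = a 0) (hbm : b m = b 0)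
    (hau : H.E (a 0) u) (hub : H.E u (b 0)) :
    pathProd a m * (edgeGen (a 0) u * edgeGen u (b 0)) =
      (edgeGen (a 0) u * edgeGen u (b 0)) * pathProd b m := by
  -- `C i` is the word of a 2-step path from `a i` to `b i`; by square-freeness it does not
  -- depend on the middle vertex, which makes every square of the ladder commute
  let C : ℕ → FreeGroup (H.V × H.V) := fun i =>
    if i = 0 then edgeGen (a 0) u * edgeGen u (b 0)
    else edgeGen (a i) (b (i - 1)) * edgeGen (b (i - 1)) (b i)
  have hC : ∀ i < m, C i = edgeGen (a i) (a (i + 1)) * edgeGen (a (i + 1)) (b i) := by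
    intro i hi
    rcases Nat.eq_zero_or_pos i with rfl | hi0
    · exact hH.edgeGen_mul_edgeGen_eq hau hub (ha 0 hi) (H.symm (hba 0 hi))
    · obtain ⟨k, rfl⟩ : ∃ k, i = k + 1 := ⟨i - 1, by omega⟩
      simpa [C] using hH.edgeGen_mul_edgeGen_eq (H.symm (hba k (by omega))) (hb k (by omega))
        (ha (k + 1) hi) (H.symm (hba (k + 1) hi))
  have hsquare : ∀ i < m, edgeGen (a i) (a (i + 1)) * C (i + 1) =
      C i * edgeGen (b i) (b (i + 1)) := by
    intro i hi
    simp [C, hC i hi, mul_assoc]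
  have hcm : C m = C 0 := by
    rcases Nat.eq_zero_or_pos m with rfl | hm
    · rfl
    obtain ⟨k, rfl⟩ : ∃ k, m = k + 1 := ⟨m - 1, by omega⟩
    simp only [C, if_neg (Nat.succ_ne_zero k), if_pos, Nat.add_sub_cancel, ham, hbm]
    refine hH.edgeGen_mul_edgeGen_eq ?_ ?_ hau hub
    · simpa [ham] using H.symm (hba k (by omega))
    · simpa [hbm] using hb k (by omega)
  have := prod_range_mul_eq_mul_prod_range hsquare
  rw [hcm] at this
  exact this

end SquareFree

namespace Walk

variable {G : SGraph} {a b : G.V}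

def toFreeGroup (γ : Walk G a b) : FreeGroup (G.V × G.V) := pathProd γ.toFun γ.len

theorem toFreeGroup_constWalk (x : G.V) : (constWalk x).toFreeGroup = 1 := rfl

theorem toFreeGroup_concat {c : G.V} (γ : Walk G a b) (δ : Walk G b c) :
    (γ.concat δ).toFreeGroup = γ.toFreeGroup * δ.toFreeGroup := by
  refine (pathProd_add _ γ.len δ.len).trans (congrArg₂ (· * ·) ?_ ?_)
  · exact pathProd_congr fun i hi => if_pos hi
  · refine pathProd_congr fun i _ => ?_
    rcases Nat.eq_zero_or_pos i with rfl | hi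
    · simp [concat, γ.end_eq, δ.start_eq]
    · simp [concat, show ¬ γ.len + i ≤ γ.len by omega]

theorem toFreeGroup_eq_of_moveA {γ δ : Walk G a b} (h : MoveA γ δ) :
    δ.toFreeGroup = γ.toFreeGroup := by
  obtain ⟨hlen, k, hk, hpre, hpost⟩ := h
  obtain ⟨r, hr⟩ : ∃ r, γ.len = k + r := ⟨γ.len - k, by omega⟩
  have hspike : δ.toFun (k + 2) = δ.toFun k := by rw [hpost k le_rfl hk, hpre k le_rfl]
  rw [toFreeGroup, toFreeGroup, hlen, hr, show k + r + 2 = k + 2 + r by omega,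
    pathProd_add, pathProd_add, pathProd_add, pathProd_two]
  simp only [add_zero, hspike, edgeGen_mul_edgeGen_swap, mul_one]
  refine congrArg₂ (· * ·) (pathProd_congr fun i hi => hpre i hi)
    (pathProd_congr fun i hi => ?_)
  rw [show k + 2 + i = k + i + 2 by omega]
  exact hpost (k + i) (by omega) (by omega)

theorem toFreeGroup_eq_of_moveB (hG : SquareFree G) {γ δ : Walk G a b} (h : MoveB γ δ) :
    γ.toFreeGroup = δ.toFreeGroup := by
  obtain ⟨hlen, j, hj⟩ := h
  rw [toFreeGroup, toFreeGroup, ← hlen]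
  by_cases hjint : 0 < j ∧ j < γ.len
  · exact hG.pathProd_eq_of_eq_except γ.adj (hlen ▸ δ.adj) hjint.1 hjint.2 hj
  refine pathProd_congr fun i hi => ?_
  by_cases hij : i = j
  · subst hij
    rcases Nat.eq_zero_or_pos i with rfl | _
    · rw [γ.start_eq, δ.start_eq]
    · rw [show i = γ.len by omega, γ.end_eq, hlen, δ.end_eq]
  · exact hj i hi hij

theorem toFreeGroup_eq_of_eqv2 (hG : SquareFree G) {γ δ : Walk G a b} (h : Eqv2 γ δ) :
    γ.toFreeGroup = δ.toFreeGroup := by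
  induction h with
  | rel _ _ hmove =>
    exact hmove.elim (fun hA => (toFreeGroup_eq_of_moveA hA).symm) (toFreeGroup_eq_of_moveB hG)
  | refl => rfl
  | symm _ _ _ ih => exact ih.symm
  | trans _ _ _ _ _ ih₁ ih₂ => exact ih₁.trans ih₂

def NoBacktrack (γ : Walk G a b) : Prop :=
  ∀ i, i + 2 ≤ γ.len → γ.toFun (i + 2) ≠ γ.toFun i

def eraseSpike (γ : Walk G a b) (i : ℕ) (hi : i + 2 ≤ γ.len)
    (hsp : γ.toFun (i + 2) = γ.toFun i) : Walk G a b where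
  len := γ.len - 2
  toFun j := if j ≤ i then γ.toFun j else γ.toFun (j + 2)
  start_eq := by simp [γ.start_eq]
  end_eq := by
    split_ifs with h
    · rw [show γ.len - 2 = i by omega, ← hsp, show i + 2 = γ.len by omega, γ.end_eq]
    · rw [show γ.len - 2 + 2 = γ.len by omega, γ.end_eq]
  adj j hj := by
    rcases lt_trichotomy j i with h | rfl | h
    · simpa [h.le, Nat.succ_le_of_lt h] using γ.adj j (by omega)
    · simpa [← hsp, show j + 1 + 2 = j + 2 + 1 by omega] using γ.adj (j + 2) (by omega)
    · simpa [show ¬ j ≤ i by omega, show ¬ j + 1 ≤ i by omega,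
        show j + 1 + 2 = j + 2 + 1 by omega] using γ.adj (j + 2) (by omega)

theorem eqv2_eraseSpike (γ : Walk G a b) (i : ℕ) (hi : i + 2 ≤ γ.len)
    (hsp : γ.toFun (i + 2) = γ.toFun i) : Eqv2 γ (γ.eraseSpike i hi hsp) := by
  refine Relation.EqvGen.symm _ _ (Relation.EqvGen.rel _ _ (Or.inl ?_))
  refine ⟨by simp only [eraseSpike]; omega, i, by simp only [eraseSpike]; omega,
    fun j hj => by simp [eraseSpike, hj], fun j hj _ => ?_⟩
  rcases hj.eq_or_lt with rfl | hj
  · simp [eraseSpike, hsp]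
  · simp [eraseSpike, show ¬ j ≤ i by omega]

theorem exists_noBacktrack_eqv2 (γ : Walk G a b) :
    ∃ δ : Walk G a b, δ.NoBacktrack ∧ Eqv2 γ δ := by
  induction hn : γ.len using Nat.strong_induction_on generalizing γ with
  | _ n ih =>
  by_cases hγ : γ.NoBacktrack
  · exact ⟨γ, hγ, Relation.EqvGen.refl γ⟩
  simp only [NoBacktrack, not_forall, not_not] at hγ
  obtain ⟨i, hi, hsp⟩ := hγ
  obtain ⟨δ, hδ, hγδ⟩ := ih (γ.len - 2) (by omega) (γ.eraseSpike i hi hsp) rfl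
  exact ⟨δ, hδ, Relation.EqvGen.trans _ _ _ (γ.eqv2_eraseSpike i hi hsp) hγδ⟩

theorem toWord_toFreeGroup [DecidableEq G.V] (hG : ∀ x, ¬ G.E x x) {γ : Walk G a b}
    (hγ : γ.NoBacktrack) :
    γ.toFreeGroup.toWord = edgeLetters γ.toFun γ.len := by
  rw [toFreeGroup, ← mk_edgeLetters, toWord_mk]
  refine IsReduced.reduce_eq (isReduced_edgeLetters (fun i hi h => ?_) hγ)
  exact hG _ (h ▸ γ.adj i hi)

theorem eqv2_of_toFreeGroup_eq_of_noBacktrack (hG : ∀ x, ¬ G.E x x) {γ δ : Walk G a b}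
    (hγ : γ.NoBacktrack) (hδ : δ.NoBacktrack) (h : γ.toFreeGroup = δ.toFreeGroup) :
    Eqv2 γ δ := by
  classical
  have hletters := toWord_toFreeGroup hG hγ ▸ toWord_toFreeGroup hG hδ ▸ congrArg toWord h
  have hlen : γ.len = δ.len := by
    simpa [length_edgeLetters] using congrArg List.length hletters
  rw [← hlen] at hletters
  have hvert := eq_of_edgeLetters_eq hletters (γ.start_eq.trans δ.start_eq.symm)
  exact Relation.EqvGen.rel _ _ (Or.inr ⟨hlen, γ.len + 1, fun i hi _ => hvert i hi⟩)

theorem eqv2_iff_toFreeGroup_eq (hG : SquareFree G) {γ δ : Walk G a b} :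
    Eqv2 γ δ ↔ γ.toFreeGroup = δ.toFreeGroup := by
  refine ⟨toFreeGroup_eq_of_eqv2 hG, fun h => ?_⟩
  obtain ⟨γ', hγ', hγγ'⟩ := γ.exists_noBacktrack_eqv2
  obtain ⟨δ', hδ', hδδ'⟩ := δ.exists_noBacktrack_eqv2
  have h' : γ'.toFreeGroup = δ'.toFreeGroup := by
    rw [← toFreeGroup_eq_of_eqv2 hG hγγ', ← toFreeGroup_eq_of_eqv2 hG hδδ', h]
  exact .trans _ _ _ hγγ' (.trans _ _ _ (eqv2_of_toFreeGroup_eq_of_noBacktrack hG.1 hγ' hδ' h')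
    (.symm _ _ hδδ'))

end Walk

section CrossHomotopy

variable {G H : SGraph} {n : ℕ}

theorem prodI_adj_finClip {x y : G.V} (hxy : G.E x y) {s t : ℕ} (hst : s ≤ t + 1)
    (hts : t ≤ s + 1) : (prodI G n).E (x, finClip n s) (y, finClip n t) :=
  ⟨hxy, by simp only [finClip]; omega, by simp only [finClip]; omega⟩

variable {h : (prodI G n).V → H.V} {v v' : G.V} {w : H.V}

def rungWord (h : (prodI G n).V → H.V) (v v' : G.V) (t : ℕ) : FreeGroup (H.V × H.V) :=
  edgeGen (h (v, finClip n t)) (h (v', finClip n t)) *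
    edgeGen (h (v', finClip n t)) (h (v, finClip n (t + 1)))

theorem toFreeGroup_realizedWalk (hh : IsGraphHom (prodI G n) H h) (hvv' : G.E v v')
    (h0 : h (v, finClip n 0) = w) (hN : h (v, finClip n n) = w) :
    (realizedWalk h hh hvv' h0 hN).toFreeGroup = ((List.range n).map (rungWord h v v')).prod := by
  rw [Walk.toFreeGroup, show (realizedWalk h hh hvv' h0 hN).len = 2 * n from rfl, pathProd_two_mul]
  refine congrArg List.prod (List.map_congr_left fun t _ => ?_)
  simp [realizedWalk, rungWord, Nat.mul_add_div, show 2 * t + 2 = 2 * (t + 1) by ring]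

theorem SquareFree.pathProd_level_mul_rungWord (hH : SquareFree H)
    (hh : IsGraphHom (prodI G n) H h) (hvv' : G.E v v') (γ : Walk G v v) (t : ℕ) :
    pathProd (fun i => h (γ.toFun i, finClip n t)) γ.len * rungWord h v v' t =
      rungWord h v v' t * pathProd (fun i => h (γ.toFun i, finClip n (t + 1))) γ.len := by
  have hladder := hH.pathProd_mul_eq_mul_pathProd (a := fun i => h (γ.toFun i, finClip n t))
    (b := fun i => h (γ.toFun i, finClip n (t + 1))) (u := h (v', finClip n t))
    (fun i hi => hh (prodI_adj_finClip (γ.adj i hi) (by omega) (by omega)))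
    (fun i hi => hh (prodI_adj_finClip (γ.adj i hi) (by omega) (by omega)))
    (fun i hi => hh (prodI_adj_finClip (γ.adj i hi) (by omega) (by omega)))
    (by simp only [γ.start_eq, γ.end_eq]) (by simp only [γ.start_eq, γ.end_eq])
    (by simpa only [γ.start_eq] using hh (prodI_adj_finClip hvv' (by omega) (by omega)))
    (by simpa only [γ.start_eq] using hh (prodI_adj_finClip (G.symm hvv') (by omega) (by omega)))
  simpa only [rungWord, γ.start_eq] using hladder

theorem SquareFree.commute_toFreeGroup_map_realizedWalk (hH : SquareFree H) {f : G.V → H.V}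
    (hf : IsGraphHom G H f) (hh : IsGraphHom (prodI G n) H h)
    (hs : ∀ x, h (x, finClip n 0) = f x) (he : ∀ x, h (x, finClip n n) = f x)
    (hvv' : G.E v v') (γ : Walk G v v) :
    Commute (γ.map f hf).toFreeGroup (realizedWalk h hh hvv' (hs v) (he v)).toFreeGroup := by
  have hlevel0 :
      (γ.map f hf).toFreeGroup = pathProd (fun i => h (γ.toFun i, finClip n 0)) γ.len :=
    pathProd_congr fun i _ => (hs _).symm
  have hlevelN :
      (γ.map f hf).toFreeGroup = pathProd (fun i => h (γ.toFun i, finClip n n)) γ.len :=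
    pathProd_congr fun i _ => (he _).symm
  have htele := prod_range_mul_eq_mul_prod_range (n := n)
    (C := fun t => pathProd (fun i => h (γ.toFun i, finClip n t)) γ.len)
    fun t _ => (hH.pathProd_level_mul_rungWord hh hvv' γ t).symm
  rw [← hlevel0, ← hlevelN] at htele
  rw [toFreeGroup_realizedWalk]
  exact htele.symm

end CrossHomotopy

theorem statement_11_general (G H : SGraph)
    (hHsf : SquareFree H)
    (f : G.V → H.V) (hf : IsGraphHom G H f)
    (v : G.V)
    (hK : ∃ γ₁ γ₂ : Walk G v v,
      ¬ Eqv2 ((Walk.map f hf γ₁).concat (Walk.map f hf γ₂))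
        ((Walk.map f hf γ₂).concat (Walk.map f hf γ₁))) :
    ∀ ω : Walk H (f v) (f v), Realizable f v ω → Eqv2 ω (constWalk (f v)) := by
  rintro ω ⟨n, h, hh, hs, he, v', hvv', hω⟩
  obtain ⟨γ₁, γ₂, hγ⟩ := hK
  have hnc : ¬ Commute (γ₁.map f hf).toFreeGroup (γ₂.map f hf).toFreeGroup := fun hc =>
    hγ ((Walk.eqv2_iff_toFreeGroup_eq hHsf).mpr
      (by rw [Walk.toFreeGroup_concat, Walk.toFreeGroup_concat]; exact hc.eq))
  have hP : (realizedWalk h hh hvv' (hs v) (he v)).toFreeGroup = 1 := by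
    by_contra hP
    exact hnc (IsFreeGroup.commute_of_commute_of_ne_one hP
      (hHsf.commute_toFreeGroup_map_realizedWalk hf hh hs he hvv' γ₁)
      (hHsf.commute_toFreeGroup_map_realizedWalk hf hh hs he hvv' γ₂))
  rw [Walk.eqv2_iff_toFreeGroup_eq hHsf, Walk.toFreeGroup_eq_of_eqv2 hHsf hω, hP,
    Walk.toFreeGroup_constWalk]

theorem statement_11 (G H : SGraph) [Finite G.V] [Finite H.V]
    (hGconn : SGraph.Connected G) (hHconn : SGraph.Connected H)
    (hGe : ∃ x y : G.V, G.E x y) (hHe : ∃ x y : H.V, H.E x y)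
    (hHsf : SquareFree H)
    (f : G.V → H.V) (hf : IsGraphHom G H f)
    (v : G.V) (hv : ∃ v' : G.V, G.E v v')
    (hK : ∃ γ₁ γ₂ : Walk G v v,
      ¬ Eqv2 ((Walk.map f hf γ₁).concat (Walk.map f hf γ₂))
        ((Walk.map f hf γ₂).concat (Walk.map f hf γ₁))) :
    ∀ ω : Walk H (f v) (f v), Realizable f v ω → Eqv2 ω (constWalk (f v)) :=
  statement_11_general G H hHsf f hf v hK
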